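/- If the diagram (A_{0∧1}; A₀, A₁; A_{0∨1}) of complete Boolean algebras with complete embeddings is correct, then A_{0∧1} = A₀ ∩ A₁. -/

import Mathlib

/-- The projection onto a complete subalgebra `S`: `h(a) = ∏ {b ∈ S : b ≥ a}`. -/
noncomputable def projSub {B : Type*} [CompleteBooleanAlgebra B] (S : Set B) (a : B) : B :=
  sInf {b | b ∈ S ∧ a ≤ b}

/-! Correctness applied to `a ∈ A₀ ∩ A₁` and `aᶜ` makes `h(a)` and `h(aᶜ)` disjoint, so
`a ≤ h(a) ≤ h(aᶜ)ᶜ ≤ a`, and `a = h(a)` lies in `A_{0∧1}`. -/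

section projSub

variable {B : Type*} [CompleteBooleanAlgebra B] {S : Set B}

theorem le_projSub (S : Set B) (a : B) : a ≤ projSub S a :=
  le_sInf fun _ hb => hb.2

theorem projSub_mem (hinf : ∀ T : Set B, T ⊆ S → sInf T ∈ S) (a : B) : projSub S a ∈ S :=
  hinf _ fun _ hb => hb.1

theorem projSub_eq_self_of_disjoint {a : B} (h : Disjoint (projSub S a) (projSub S aᶜ)) :
    projSub S a = a :=
  le_antisymm (h.le_compl_right.trans (compl_le_of_compl_le (le_projSub S aᶜ)))
    (le_projSub S a)

end projSub

theorem stmt10_general {B : Type*} [CompleteBooleanAlgebra B] (S01 S0 S1 : Set B)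
    (h010 : S01 ⊆ S0) (h011 : S01 ⊆ S1)
    (hinf01 : ∀ T : Set B, T ⊆ S01 → sInf T ∈ S01)
    (hcompl1 : ∀ x ∈ S1, xᶜ ∈ S1)
    (hcorrect : ∀ a0 ∈ S0, ∀ a1 ∈ S1,
      projSub S01 a0 ⊓ projSub S01 a1 ≠ ⊥ → a0 ⊓ a1 ≠ ⊥) :
    S01 = S0 ∩ S1 := by
  refine Set.Subset.antisymm (fun x hx => ⟨h010 hx, h011 hx⟩) ?_
  rintro a ⟨ha0, ha1⟩
  have hdisj : Disjoint (projSub S01 a) (projSub S01 aᶜ) :=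
    disjoint_iff.mpr (not_not.mp fun h => hcorrect a ha0 aᶜ (hcompl1 a ha1) h inf_compl_eq_bot)
  rw [← projSub_eq_self_of_disjoint hdisj]
  exact projSub_mem hinf01 a

/-- If the diagram `(A_{0∧1}; A₀, A₁; A_{0∨1})` of complete Boolean algebras (modelled
as complete subalgebras `S01 ⊆ S0, S1` of the ambient algebra `B = A_{0∨1}`) is correct,
then `A_{0∧1} = A₀ ∩ A₁`. -/
theorem stmt10 {B : Type*} [CompleteBooleanAlgebra B] (S01 S0 S1 : Set B)
    (h010 : S01 ⊆ S0) (h011 : S01 ⊆ S1)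
    (hinf01 : ∀ T : Set B, T ⊆ S01 → sInf T ∈ S01)
    (hcompl01 : ∀ x ∈ S01, xᶜ ∈ S01)
    (hinf0 : ∀ T : Set B, T ⊆ S0 → sInf T ∈ S0)
    (hcompl0 : ∀ x ∈ S0, xᶜ ∈ S0)
    (hinf1 : ∀ T : Set B, T ⊆ S1 → sInf T ∈ S1)
    (hcompl1 : ∀ x ∈ S1, xᶜ ∈ S1)
    (hcorrect : ∀ a0 ∈ S0, ∀ a1 ∈ S1,
      projSub S01 a0 ⊓ projSub S01 a1 ≠ ⊥ → a0 ⊓ a1 ≠ ⊥) :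
    S01 = S0 ∩ S1 :=
  stmt10_general S01 S0 S1 h010 h011 hinf01 hcompl1 hcorrect
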